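/- arXiv:2208.01777 — 4 statements merged into one kernel-verified Lean document; each statement's English description precedes it below -/
import Mathlib

section
/- If f : ℝⁿ → ℝ is strictly convex, differentiable, and 1-coercive (i.e., f(x)/‖x‖ → +∞ as ‖x‖ → ∞), then its Fenchel conjugate f* is finite-valued on all of ℝⁿ, strictly convex, differentiable, and 1-coercive. -/
open Filter Set RealInnerProductSpace

variable {n : ℕ}

local notation "E" => EuclideanSpace ℝ (Fin n)

noncomputable def fenchel {n : ℕ} (f : EuclideanSpace ℝ (Fin n) → ℝ)
    (y : EuclideanSpace ℝ (Fin n)) : ℝ :=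
  sSup (Set.range fun x => ⟪y, x⟫ - f x)

def Coercive1 {n : ℕ} (f : EuclideanSpace ℝ (Fin n) → ℝ) : Prop :=
  Tendsto (fun x => f x / ‖x‖) (Filter.comap norm Filter.atTop) Filter.atTop

/-- Extract a linear lower bound from 1-coercivity. -/
lemma coercive_bound {f : E → ℝ} (h : Tendsto (fun x : E => f x / ‖x‖)
    (Filter.comap norm Filter.atTop) Filter.atTop) (R : ℝ) :
    ∃ M : ℝ, 1 ≤ M ∧ ∀ z : E, M ≤ ‖z‖ → R * ‖z‖ ≤ f z := by
  have hev : ∀ᶠ x : E in Filter.comap norm Filter.atTop, R ≤ f x / ‖x‖ :=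
    h.eventually (eventually_ge_atTop R)
  rw [Filter.eventually_comap] at hev
  rw [Filter.eventually_atTop] at hev
  obtain ⟨a, ha⟩ := hev
  refine ⟨max a 1, le_max_right _ _, fun z hz => ?_⟩
  have h1 : (1:ℝ) ≤ ‖z‖ := le_trans (le_max_right a 1) hz
  have h2 : R ≤ f z / ‖z‖ := ha ‖z‖ (le_trans (le_max_left a 1) hz) z rfl
  have hpos : (0:ℝ) < ‖z‖ := lt_of_lt_of_le one_pos h1
  calc R * ‖z‖ ≤ (f z / ‖z‖) * ‖z‖ := by nlinarith
    _ = f z := by field_simp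

/-- Existence of a maximizer in the Fenchel sup. -/
lemma exists_max {f : E → ℝ} (hc : Continuous f)
    (hcoer : Tendsto (fun x : E => f x / ‖x‖) (Filter.comap norm Filter.atTop) Filter.atTop)
    (y : E) : ∃ x : E, ∀ z : E, ⟪y, z⟫ - f z ≤ ⟪y, x⟫ - f x := by
  obtain ⟨M, hM1, hM⟩ := coercive_bound hcoer (‖y‖ + 1)
  set M' : ℝ := max M (|f 0| + 1) with hM'
  have hM'1 : (1:ℝ) ≤ M' := le_trans hM1 (le_max_left _ _)
  have hout : ∀ z : E, M' ≤ ‖z‖ → ⟪y, z⟫ - f z < ⟪y, (0:E)⟫ - f 0 := by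
    intro z hz
    have h1 : (‖y‖ + 1) * ‖z‖ ≤ f z := hM z (le_trans (le_max_left _ _) hz)
    have h2 : ⟪y, z⟫ ≤ ‖y‖ * ‖z‖ := real_inner_le_norm y z
    have h3 : |f 0| + 1 ≤ ‖z‖ := le_trans (le_max_right M _) hz
    have h4 : f 0 ≤ |f 0| := le_abs_self _
    have h5 : ⟪y, (0:E)⟫ = 0 := inner_zero_right y
    rw [h5]
    nlinarith
  have hcpt : IsCompact (Metric.closedBall (0:E) M') := isCompact_closedBall _ _
  have hne : (Metric.closedBall (0:E) M').Nonempty :=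
    ⟨0, Metric.mem_closedBall_self (by linarith)⟩
  have hcont : ContinuousOn (fun z : E => ⟪y, z⟫ - f z) (Metric.closedBall (0:E) M') :=
    (Continuous.sub (continuous_const.inner continuous_id) hc).continuousOn
  obtain ⟨x, hxmem, hxmax⟩ := hcpt.exists_isMaxOn hne hcont
  refine ⟨x, fun z => ?_⟩
  by_cases hz : ‖z‖ ≤ M'
  · exact hxmax (Metric.mem_closedBall.2 (by simpa using hz))
  · have := hout z (le_of_lt (not_le.1 hz))
    have h0 : ⟪y, (0:E)⟫ - f 0 ≤ ⟪y, x⟫ - f x :=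
      hxmax (Metric.mem_closedBall_self (by linarith))
    linarith

lemma fenchel_eq_of_max {f : E → ℝ} {y x : E}
    (hx : ∀ z : E, ⟪y, z⟫ - f z ≤ ⟪y, x⟫ - f x) :
    fenchel f y = ⟪y, x⟫ - f x := by
  apply IsGreatest.csSup_eq
  exact ⟨⟨x, rfl⟩, by rintro _ ⟨z, rfl⟩; exact hx z⟩

lemma le_fenchel {f : E → ℝ} (hbdd : BddAbove (Set.range fun x : E => ⟪y, x⟫ - f x))
    (z : E) : ⟪y, z⟫ - f z ≤ fenchel f y :=
  le_csSup hbdd ⟨z, rfl⟩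

/-- At a maximizer, the gradient condition holds. -/
lemma grad_eq_of_max {f : E → ℝ} (hdiff : Differentiable ℝ f) {y x : E}
    (hx : ∀ z : E, ⟪y, z⟫ - f z ≤ ⟪y, x⟫ - f x) :
    fderiv ℝ f x = innerSL ℝ y := by
  have hd : HasFDerivAt (fun z : E => ⟪y, z⟫ - f z) (innerSL ℝ y - fderiv ℝ f x) x :=
    ((innerSL ℝ y).hasFDerivAt).sub (hdiff x).hasFDerivAt
  have hmax : IsLocalMax (fun z : E => ⟪y, z⟫ - f z) x := by
    apply Filter.Eventually.of_forall; intro z; exact hx z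
  have h0 : innerSL ℝ y - fderiv ℝ f x = 0 := by
    have := hmax.fderiv_eq_zero
    rwa [hd.fderiv] at this
  have := sub_eq_zero.1 h0
  exact this.symm

lemma eq_of_grad {y₁ y₂ : E} (h : innerSL ℝ y₁ = (innerSL ℝ y₂ : E →L[ℝ] ℝ)) : y₁ = y₂ := by
  have h2 : ⟪y₁ - y₂, y₁ - y₂⟫ = 0 := by
    have := congrArg (fun L : E →L[ℝ] ℝ => L (y₁ - y₂)) h
    simp only [innerSL_apply_apply] at this
    rw [inner_sub_left, this]
    ring
  exact sub_eq_zero.1 (inner_self_eq_zero.1 h2)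

/-- Uniqueness of the maximizer, from strict convexity. -/
lemma max_unique {f : E → ℝ} (hsc : StrictConvexOn ℝ Set.univ f) {y x₁ x₂ : E}
    (h1 : ∀ z : E, ⟪y, z⟫ - f z ≤ ⟪y, x₁⟫ - f x₁)
    (h2 : ∀ z : E, ⟪y, z⟫ - f z ≤ ⟪y, x₂⟫ - f x₂) : x₁ = x₂ := by
  by_contra hne
  have hmid := hsc.2 (mem_univ x₁) (mem_univ x₂) hne (by norm_num : (0:ℝ) < 1/2)
    (by norm_num : (0:ℝ) < 1/2) (by norm_num)
  set z := (1/2 : ℝ) • x₁ + (1/2 : ℝ) • x₂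
  have heq : ⟪y, x₁⟫ - f x₁ = ⟪y, x₂⟫ - f x₂ := le_antisymm (h2 x₁) (h1 x₂)
  have hz : ⟪y, z⟫ = (1/2 : ℝ) * ⟪y, x₁⟫ + (1/2 : ℝ) * ⟪y, x₂⟫ := by
    simp [z, inner_add_right, inner_smul_right]
  have := h1 z
  rw [hz] at this
  simp only [smul_eq_mul] at hmid
  linarith

/-- Uniform bound on maximizers for bounded `y`. -/
lemma max_bound {f : E → ℝ}
    (hcoer : Tendsto (fun x : E => f x / ‖x‖) (Filter.comap norm Filter.atTop) Filter.atTop)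
    (c : ℝ) (hc : 0 ≤ c) :
    ∃ K : ℝ, 0 < K ∧ ∀ y x : E, ‖y‖ ≤ c →
      (∀ z : E, ⟪y, z⟫ - f z ≤ ⟪y, x⟫ - f x) → ‖x‖ ≤ K := by
  obtain ⟨M, hM1, hM⟩ := coercive_bound hcoer (c + 1)
  refine ⟨max M (|f 0|), lt_of_lt_of_le one_pos (le_trans hM1 (le_max_left _ _)),
    fun y x hy hx => ?_⟩
  by_cases hxM : ‖x‖ ≤ M
  · exact le_trans hxM (le_max_left _ _)
  · push_neg at hxM
    have h1 : (c + 1) * ‖x‖ ≤ f x := hM x hxM.le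
    have h2 : ⟪y, (0:E)⟫ - f 0 ≤ ⟪y, x⟫ - f x := hx 0
    have h3 : ⟪y, x⟫ ≤ ‖y‖ * ‖x‖ := real_inner_le_norm y x
    have h4 : ⟪y, (0:E)⟫ = 0 := inner_zero_right y
    have h5 : ‖y‖ * ‖x‖ ≤ c * ‖x‖ := by
      apply mul_le_mul_of_nonneg_right hy (norm_nonneg x)
    have h6 : f 0 ≤ |f 0| := le_abs_self _
    have hx0 : (0:ℝ) ≤ ‖x‖ := norm_nonneg x
    have : ‖x‖ ≤ |f 0| := by nlinarith
    exact le_trans this (le_max_right _ _)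

/-- Quantitative continuity of the argmax map. -/
lemma max_cont {f : E → ℝ} (hc : Continuous f) (hsc : StrictConvexOn ℝ Set.univ f)
    (hcoer : Tendsto (fun x : E => f x / ‖x‖) (Filter.comap norm Filter.atTop) Filter.atTop)
    {y x : E} (hx : ∀ z : E, ⟪y, z⟫ - f z ≤ ⟪y, x⟫ - f x) {ε : ℝ} (hε : 0 < ε) :
    ∃ δ : ℝ, 0 < δ ∧ ∀ y' x' : E, ‖y' - y‖ ≤ δ →
      (∀ z : E, ⟪y', z⟫ - f z ≤ ⟪y', x'⟫ - f x') → ‖x' - x‖ ≤ ε := by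
  set c : ℝ := ‖y‖ + 1 with hcdef
  obtain ⟨K, hK0, hK⟩ := max_bound hcoer c (by positivity)
  have hxK : ‖x‖ ≤ K := hK y x (by simp [hcdef]) hx
  set S : Set E := Metric.closedBall (0:E) K ∩ {z | ε ≤ ‖z - x‖} with hSdef
  have hScpt : IsCompact S :=
    (isCompact_closedBall _ _).inter_right
      (isClosed_le continuous_const ((continuous_id.sub continuous_const).norm))
  -- key bound step, shared by both cases
  have hbound : ∀ y' x' : E, ‖y' - y‖ ≤ 1 →
      (∀ z : E, ⟪y', z⟫ - f z ≤ ⟪y', x'⟫ - f x') →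
      ‖x'‖ ≤ K ∧ (⟪y, x⟫ - f x) - 2 * K * ‖y' - y‖ ≤ ⟪y, x'⟫ - f x' := by
    intro y' x' hyd hx'
    have hy'c : ‖y'‖ ≤ c := by
      have := norm_sub_norm_le y' y
      simp only [hcdef]
      linarith
    have hx'K : ‖x'‖ ≤ K := hK y' x' hy'c hx'
    refine ⟨hx'K, ?_⟩
    have h1 : ⟪y', x⟫ - f x ≤ ⟪y', x'⟫ - f x' := hx' x
    have h2 : |⟪y' - y, x⟫| ≤ ‖y' - y‖ * ‖x‖ := abs_real_inner_le_norm _ _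
    have h3 : |⟪y - y', x'⟫| ≤ ‖y - y'‖ * ‖x'‖ := abs_real_inner_le_norm _ _
    have e1 : ⟪y', x⟫ = ⟪y, x⟫ + ⟪y' - y, x⟫ := by rw [inner_sub_left]; ring
    have e2 : ⟪y, x'⟫ = ⟪y', x'⟫ + ⟪y - y', x'⟫ := by rw [inner_sub_left]; ring
    have hrev : ‖y - y'‖ = ‖y' - y‖ := norm_sub_rev _ _
    have hb2 : ‖y' - y‖ * ‖x‖ ≤ ‖y' - y‖ * K :=
      mul_le_mul_of_nonneg_left hxK (norm_nonneg _)
    have hb3 : ‖y - y'‖ * ‖x'‖ ≤ ‖y' - y‖ * K := by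
      rw [hrev]; exact mul_le_mul_of_nonneg_left hx'K (norm_nonneg _)
    have a2 := abs_le.1 h2
    have a3 := abs_le.1 h3
    nlinarith
  by_cases hne : S.Nonempty
  · have hcont : ContinuousOn (fun z : E => ⟪y, z⟫ - f z) S :=
      (Continuous.sub (continuous_const.inner continuous_id) hc).continuousOn
    obtain ⟨z₀, hz₀mem, hz₀max⟩ := hScpt.exists_isMaxOn hne hcont
    set m : ℝ := ⟪y, z₀⟫ - f z₀ with hmdef
    have hz₀ne : z₀ ≠ x := by
      intro h
      have := hz₀mem.2
      rw [h] at this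
      simp at this
      linarith
    have hm : m < ⟪y, x⟫ - f x := by
      rcases lt_or_eq_of_le (hx z₀) with h | h
      · exact h
      · exfalso
        have hz₀max' : ∀ z : E, ⟪y, z⟫ - f z ≤ ⟪y, z₀⟫ - f z₀ := fun z => by
          have := hx z; linarith
        exact hz₀ne (max_unique hsc hz₀max' hx)
    set γ : ℝ := (⟪y, x⟫ - f x) - m with hγdef
    have hγ : 0 < γ := sub_pos.2 hm
    refine ⟨min 1 (γ / (4 * K + 1)), by positivity, fun y' x' hyd hx' => ?_⟩
    have hyd1 : ‖y' - y‖ ≤ 1 := le_trans hyd (min_le_left _ _)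
    obtain ⟨hx'K, hlow⟩ := hbound y' x' hyd1 hx'
    by_contra hcon
    push_neg at hcon
    have hx'S : x' ∈ S := ⟨by simpa using hx'K, le_of_lt hcon⟩
    have hup : ⟪y, x'⟫ - f x' ≤ m := hz₀max hx'S
    have hydγ : ‖y' - y‖ ≤ γ / (4 * K + 1) := le_trans hyd (min_le_right _ _)
    have : 2 * K * ‖y' - y‖ ≤ 2 * K * (γ / (4 * K + 1)) :=
      mul_le_mul_of_nonneg_left hydγ (by positivity)
    have hlt : 2 * K * (γ / (4 * K + 1)) < γ := by
      rw [← mul_div_assoc, div_lt_iff₀ (by positivity : (0:ℝ) < 4 * K + 1)]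
      nlinarith
    linarith
  · refine ⟨1, one_pos, fun y' x' hyd hx' => ?_⟩
    obtain ⟨hx'K, -⟩ := hbound y' x' hyd hx'
    by_contra hcon
    push_neg at hcon
    exact hne ⟨x', ⟨by simpa using hx'K, le_of_lt hcon⟩⟩

theorem stmt2 {n : ℕ} (f : EuclideanSpace ℝ (Fin n) → ℝ)
    (hsc : StrictConvexOn ℝ Set.univ f) (hdiff : Differentiable ℝ f)
    (hcoer : Coercive1 f) :
    (∀ y, BddAbove (Set.range fun x => ⟪y, x⟫ - f x)) ∧
    StrictConvexOn ℝ Set.univ (fenchel f) ∧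
    Differentiable ℝ (fenchel f) ∧
    Coercive1 (fenchel f) := by
  have hc : Continuous f := hdiff.continuous
  have hcoer' : Tendsto (fun x : EuclideanSpace ℝ (Fin n) => f x / ‖x‖) (Filter.comap norm Filter.atTop)
      Filter.atTop := hcoer
  have hbdd : ∀ y : EuclideanSpace ℝ (Fin n), BddAbove (Set.range fun x : EuclideanSpace ℝ (Fin n) => ⟪y, x⟫ - f x) := by
    intro y
    obtain ⟨x, hx⟩ := exists_max hc hcoer' y
    exact ⟨⟪y, x⟫ - f x, by rintro _ ⟨z, rfl⟩; exact hx z⟩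
  refine ⟨hbdd, ⟨convex_univ, ?_⟩, ?_, ?_⟩
  · -- strict convexity
    rintro y₁ - y₂ - hne a b ha hb hab
    obtain ⟨x, hx⟩ := exists_max hc hcoer' (a • y₁ + b • y₂)
    have hval : fenchel f (a • y₁ + b • y₂)
        = a * (⟪y₁, x⟫ - f x) + b * (⟪y₂, x⟫ - f x) := by
      rw [fenchel_eq_of_max hx]
      have hi : ⟪a • y₁ + b • y₂, x⟫ = a * ⟪y₁, x⟫ + b * ⟪y₂, x⟫ := by
        rw [inner_add_left, real_inner_smul_left, real_inner_smul_left]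
      rw [hi]
      linear_combination (f x) * hab
    have h1 : ⟪y₁, x⟫ - f x ≤ fenchel f y₁ := le_fenchel (hbdd y₁) x
    have h2 : ⟪y₂, x⟫ - f x ≤ fenchel f y₂ := le_fenchel (hbdd y₂) x
    have hne2 : ¬(⟪y₁, x⟫ - f x = fenchel f y₁ ∧ ⟪y₂, x⟫ - f x = fenchel f y₂) := by
      rintro ⟨e1, e2⟩
      have hm1 : ∀ z : EuclideanSpace ℝ (Fin n), ⟪y₁, z⟫ - f z ≤ ⟪y₁, x⟫ - f x := fun z => by
        rw [e1]; exact le_fenchel (hbdd y₁) z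
      have hm2 : ∀ z : EuclideanSpace ℝ (Fin n), ⟪y₂, z⟫ - f z ≤ ⟪y₂, x⟫ - f x := fun z => by
        rw [e2]; exact le_fenchel (hbdd y₂) z
      have g1 := grad_eq_of_max hdiff hm1
      have g2 := grad_eq_of_max hdiff hm2
      exact hne (eq_of_grad (by rw [← g1, g2]))
    have hstrict : a * (⟪y₁, x⟫ - f x) + b * (⟪y₂, x⟫ - f x)
        < a * fenchel f y₁ + b * fenchel f y₂ := by
      rcases lt_or_eq_of_le h1 with h | h
      · have := mul_lt_mul_of_pos_left h ha
        have := mul_le_mul_of_nonneg_left h2 hb.le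
        linarith
      · rcases lt_or_eq_of_le h2 with h' | h'
        · have := mul_lt_mul_of_pos_left h' hb
          have := mul_le_mul_of_nonneg_left h1 ha.le
          linarith
        · exact absurd ⟨h, h'⟩ hne2
    simp only [smul_eq_mul]
    linarith
  · -- differentiability
    intro y
    obtain ⟨x, hx⟩ := exists_max hc hcoer' y
    have hder : HasFDerivAt (fenchel f) (innerSL ℝ x) y := by
      rw [hasFDerivAt_iff_isLittleO_nhds_zero, Asymptotics.isLittleO_iff]
      intro cε hcε
      obtain ⟨δ, hδ, hδP⟩ := max_cont hc hsc hcoer' hx hcε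
      filter_upwards [Metric.closedBall_mem_nhds (0 : EuclideanSpace ℝ (Fin n)) hδ] with h hh
      set y' : EuclideanSpace ℝ (Fin n) := y + h with hy'def
      have hsub : y' - y = h := by rw [hy'def]; abel
      have hyd : ‖y' - y‖ ≤ δ := by
        rw [hsub]
        simpa [dist_eq_norm] using Metric.mem_closedBall.1 hh
      obtain ⟨x', hx'⟩ := exists_max hc hcoer' y'
      have hxb : ‖x' - x‖ ≤ cε := hδP y' x' hyd hx'
      have e1 : fenchel f y = ⟪y, x⟫ - f x := fenchel_eq_of_max hx
      have e2 : fenchel f y' = ⟪y', x'⟫ - f x' := fenchel_eq_of_max hx'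
      have l1 : ⟪y', x⟫ - f x ≤ fenchel f y' := le_fenchel (hbdd y') x
      have l2 : ⟪y', x⟫ = ⟪y, x⟫ + ⟪y' - y, x⟫ := by rw [inner_sub_left]; ring
      have u1 : ⟪y, x'⟫ - f x' ≤ fenchel f y := le_fenchel (hbdd y) x'
      have u2 : ⟪y', x'⟫ = ⟪y, x'⟫ + ⟪y' - y, x'⟫ := by rw [inner_sub_left]; ring
      have hsl : (innerSL ℝ x : EuclideanSpace ℝ (Fin n) →L[ℝ] ℝ) (y' - y) = ⟪y' - y, x⟫ := by
        rw [innerSL_apply_apply, real_inner_comm]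
      have hdiffinner : ⟪y' - y, x'⟫ - ⟪y' - y, x⟫ = ⟪y' - y, x' - x⟫ := by
        rw [inner_sub_right]
      have hcs : |⟪y' - y, x' - x⟫| ≤ ‖y' - y‖ * ‖x' - x‖ := abs_real_inner_le_norm _ _
      have hcs2 : ‖y' - y‖ * ‖x' - x‖ ≤ cε * ‖y' - y‖ := by
        rw [mul_comm]
        exact mul_le_mul_of_nonneg_right hxb (norm_nonneg _)
      have hgoal : fenchel f (y + h) = fenchel f y' := by rw [hy'def]
      rw [Real.norm_eq_abs, ← hsub, abs_le, hsl]
      have := abs_le.1 hcs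
      constructor
      · nlinarith [mul_nonneg (le_of_lt hcε) (norm_nonneg (y' - y))]
      · linarith
    exact hder.differentiableAt
  · -- coercivity
    rw [Coercive1, tendsto_atTop]
    intro C
    set R : ℝ := |C| + 1 with hRdef
    have hR : 0 < R := by positivity
    obtain ⟨x₀, -, hx₀⟩ := (isCompact_closedBall (0:EuclideanSpace ℝ (Fin n)) R).exists_isMaxOn
      ⟨0, Metric.mem_closedBall_self hR.le⟩ hc.continuousOn
    set CR : ℝ := f x₀ with hCRdef
    rw [Filter.eventually_comap]
    filter_upwards [eventually_ge_atTop (max 1 |CR|)] with b hb y hyb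
    have hy1 : (1:ℝ) ≤ ‖y‖ := by rw [hyb]; exact le_trans (le_max_left _ _) hb
    have hyCR : |CR| ≤ ‖y‖ := by rw [hyb]; exact le_trans (le_max_right _ _) hb
    have hypos : (0:ℝ) < ‖y‖ := lt_of_lt_of_le one_pos hy1
    set z : EuclideanSpace ℝ (Fin n) := (R / ‖y‖) • y with hzdef
    have hzn : ‖z‖ = R := by
      rw [hzdef, norm_smul, Real.norm_eq_abs, abs_div, abs_of_pos hR,
        abs_of_pos hypos, div_mul_cancel₀]
      exact ne_of_gt hypos
    have hfz : f z ≤ CR := hx₀ (Metric.mem_closedBall.2 (by simp [hzn]))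
    have hin : ⟪y, z⟫ = R * ‖y‖ := by
      rw [hzdef, real_inner_smul_right, real_inner_self_eq_norm_mul_norm]
      field_simp
    have h1 : ⟪y, z⟫ - f z ≤ fenchel f y := le_fenchel (hbdd y) z
    rw [le_div_iff₀ hypos]
    have hCabs : C ≤ |C| := le_abs_self C
    have hCRabs : CR ≤ |CR| := le_abs_self CR
    nlinarith
end

section
/- If f : ℝⁿ → ℝ is strictly convex, differentiable, and 1-coercive, then the gradient map ∇f is a continuous bijection from ℝⁿ onto ℝⁿ with continuous inverse. -/
open Filter Set RealInnerProductSpace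

/-!
Everything rests on the first-order inequality `f x + ⟪∇f x, y - x⟫ ≤ f y` of a differentiable
convex function. Strict convexity makes it strict for `y ≠ x`, so `∇f` is injective. Tested against
a vector of length `t` pointing along `∇f x - ∇f x₀`, it bounds `t ‖∇f x - ∇f x₀‖` by the
first-order Taylor remainder of `f` at `x₀` at a point within `‖x - x₀‖ + t` of `x₀`, which gives
continuity of `∇f`. A minimiser of the coercive function `f - ⟪y, ·⟫` has gradient `y`, so `∇f` is
onto. Finally `(f x - f 0) / ‖x‖ ≤ ‖∇f x‖` makes `∇f` proper, hence a closed map, so its inverse is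
continuous.
-/

open Bornology

section Gradient

variable {F : Type*} [NormedAddCommGroup F] [InnerProductSpace ℝ F] {f : F → ℝ} {f' : F → F}

theorem inner_sub_le_of_forall_add_inner_le (hsub : ∀ x y, f x + ⟪f' x, y - x⟫ ≤ f y)
    (x₀ x v : F) : ⟪f' x - f' x₀, v⟫ ≤ f (x + v) - f x₀ - ⟪f' x₀, x + v - x₀⟫ := by
  have h₁ := hsub x (x + v)
  have h₂ := hsub x₀ x
  rw [add_sub_cancel_left] at h₁
  rw [inner_sub_left, add_sub_right_comm, inner_add_right]
  linarith

variable [CompleteSpace F] {g x : F}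

theorem continuousAt_of_forall_add_inner_le (hsub : ∀ x y, f x + ⟪f' x, y - x⟫ ≤ f y)
    {x₀ : F} (hx₀ : HasGradientAt f (f' x₀) x₀) : ContinuousAt f' x₀ := by
  rw [Metric.continuousAt_iff]
  intro ε hε
  obtain ⟨δ, hδ, hremainder⟩ := Metric.eventually_nhds_iff.1
    (hx₀.hasFDerivAt.isLittleO.def (half_pos hε))
  obtain ⟨t, ht, rfl⟩ : ∃ t, 0 < t ∧ δ = 2 * t := ⟨δ / 2, half_pos hδ, by ring⟩
  refine ⟨t, ht, fun x hx => ?_⟩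
  rw [dist_eq_norm] at hx ⊢
  set d := f' x - f' x₀
  set v := (t / ‖d‖) • d
  have hv : ‖v‖ ≤ t := by
    rw [norm_smul, Real.norm_of_nonneg (by positivity)]
    rcases eq_or_ne ‖d‖ 0 with h | h
    · rw [h, mul_zero]
      exact ht.le
    · rw [div_mul_cancel₀ _ h]
  have hdv : ⟪d, v⟫ = t * ‖d‖ := by
    rw [real_inner_smul_right, real_inner_self_eq_norm_sq]
    rcases eq_or_ne ‖d‖ 0 with h | h
    · simp [h]
    · field_simp
  have hxv : ‖x + v - x₀‖ ≤ ‖x - x₀‖ + t :=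
    (norm_add_le_of_le le_rfl hv).trans_eq' (by abel_nf)
  have hR := hremainder (y := x + v) (by rw [dist_eq_norm]; linarith)
  simp only [InnerProductSpace.toDual_apply_apply, Real.norm_eq_abs] at hR
  have key := inner_sub_le_of_forall_add_inner_le hsub x₀ x v
  have hscaled : t * ‖d‖ < t * ε := by
    nlinarith [le_abs_self (f (x + v) - f x₀ - ⟪f' x₀, x + v - x₀⟫)]
  exact lt_of_mul_lt_mul_left hscaled ht.le

theorem HasGradientAt.hasDerivAt_comp_lineMap (hg : HasGradientAt f g x) (y : F) :
    HasDerivAt (f ∘ (AffineMap.lineMap x y : ℝ → F)) ⟪g, y - x⟫ 0 := by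
  have hline : HasDerivAt (AffineMap.lineMap x y : ℝ → F) (y - x) 0 :=
    AffineMap.hasDerivAt_lineMap
  have hf : HasFDerivAt f (InnerProductSpace.toDual ℝ F g) (AffineMap.lineMap x y (0 : ℝ)) := by
    simpa using hg.hasFDerivAt
  simpa using hf.comp_hasDerivAt 0 hline

theorem ConvexOn.add_inner_le_of_hasGradientAt (hf : ConvexOn ℝ univ f)
    (hg : HasGradientAt f g x) (y : F) : f x + ⟪g, y - x⟫ ≤ f y := by
  have hslope := (hf.comp_affineMap (AffineMap.lineMap x y)).le_slope_of_hasDerivAt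
    (mem_univ 0) (mem_univ 1) zero_lt_one (hg.hasDerivAt_comp_lineMap y)
  simp only [slope_def_field, Function.comp_apply, AffineMap.lineMap_apply_one,
    AffineMap.lineMap_apply_zero, sub_zero, div_one] at hslope
  linarith

theorem ConvexOn.continuous_of_hasGradientAt (hf : ConvexOn ℝ univ f)
    (hf' : ∀ x, HasGradientAt f (f' x) x) : Continuous f' :=
  continuous_iff_continuousAt.2 fun x₀ => continuousAt_of_forall_add_inner_le
    (fun x y => hf.add_inner_le_of_hasGradientAt (hf' x) y) (hf' x₀)

theorem StrictConvexOn.add_inner_lt_of_hasGradientAt (hf : StrictConvexOn ℝ univ f)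
    (hg : HasGradientAt f g x) {y : F} (hxy : x ≠ y) : f x + ⟪g, y - x⟫ < f y := by
  have hmid := hf.2 (mem_univ x) (mem_univ y) hxy (by norm_num : (0 : ℝ) < 1 / 2)
    (by norm_num : (0 : ℝ) < 1 / 2) (by norm_num)
  have hle := hf.convexOn.add_inner_le_of_hasGradientAt hg ((1 / 2 : ℝ) • x + (1 / 2 : ℝ) • y)
  have hsub : (1 / 2 : ℝ) • x + (1 / 2 : ℝ) • y - x = (1 / 2 : ℝ) • (y - x) := by module
  rw [hsub, real_inner_smul_right] at hle
  simp only [smul_eq_mul] at hmid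
  linarith

theorem StrictConvexOn.injective_of_hasGradientAt (hf : StrictConvexOn ℝ univ f)
    (hf' : ∀ x, HasGradientAt f (f' x) x) : Function.Injective f' := by
  intro x y hxy
  by_contra hne
  have h₁ := hf.add_inner_lt_of_hasGradientAt (hf' x) hne
  have h₂ := hf.add_inner_lt_of_hasGradientAt (hf' y) (Ne.symm hne)
  rw [← hxy, ← neg_sub, inner_neg_right] at h₂
  linarith

end Gradient

theorem Function.Bijective.continuous_invFun_of_isClosedMap {X Y : Type*} [TopologicalSpace X]
    [TopologicalSpace Y] [Nonempty X] {f : X → Y} (hf : Function.Bijective f)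
    (hcl : IsClosedMap f) : Continuous (Function.invFun f) := by
  refine continuous_iff_isClosed.2 fun s hs => ?_
  rw [← image_eq_preimage_of_inverse (Function.leftInverse_invFun hf.1)
    (Function.rightInverse_invFun hf.2)]
  exact hcl s hs

section Coercive

variable {n : ℕ} {f : EuclideanSpace ℝ (Fin n) → ℝ}
  {f' : EuclideanSpace ℝ (Fin n) → EuclideanSpace ℝ (Fin n)}

local notation "E" => EuclideanSpace ℝ (Fin n)

theorem Coercive1.tendsto_cobounded (hf : Coercive1 f) :
    Tendsto (fun x => f x / ‖x‖) (cobounded E) atTop := by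
  rwa [Coercive1, comap_norm_atTop] at hf

theorem Coercive1.tendsto_sub_inner (hf : Coercive1 f) (y : E) :
    Tendsto (fun x => f x - ⟪y, x⟫) (cobounded E) atTop := by
  have hnorm : Tendsto (‖·‖) (cobounded E) atTop := tendsto_norm_cobounded_atTop
  refine tendsto_atTop_mono' _ ?_
    (hnorm.atTop_mul_atTop₀ (tendsto_atTop_add_const_right _ (-‖y‖) hf.tendsto_cobounded))
  filter_upwards [hnorm.eventually_gt_atTop 0] with x hx
  have hcs := real_inner_le_norm y x
  rw [mul_add, mul_div_cancel₀ _ hx.ne']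
  nlinarith

theorem Coercive1.surjective_of_hasGradientAt (hf : Coercive1 f)
    (hf' : ∀ x, HasGradientAt f (f' x) x) : Function.Surjective f' := by
  intro y
  have hcont : Continuous f := continuous_iff_continuousAt.2 fun x => (hf' x).continuousAt
  obtain ⟨x, hx⟩ := (hcont.sub (continuous_const.inner continuous_id)).exists_forall_le
    (Metric.cobounded_eq_cocompact (α := E) ▸ hf.tendsto_sub_inner y)
  have hmin : IsLocalMin (fun z => f z - ⟪y, z⟫) x := Eventually.of_forall hx
  have hderiv := hmin.hasFDerivAt_eq_zero ((hf' x).hasFDerivAt.sub (innerSL ℝ y).hasFDerivAt)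
  have hdir := DFunLike.congr_fun hderiv (f' x - y)
  simp only [sub_apply, InnerProductSpace.toDual_apply_apply, innerSL_apply_apply,
    zero_apply, ← inner_sub_left] at hdir
  exact ⟨x, sub_eq_zero.1 (inner_self_eq_zero.1 hdir)⟩

theorem Coercive1.tendsto_cobounded_of_hasGradientAt (hf : Coercive1 f)
    (hconv : ConvexOn ℝ univ f) (hf' : ∀ x, HasGradientAt f (f' x) x) :
    Tendsto f' (cobounded E) (cobounded E) := by
  rw [← tendsto_norm_atTop_iff_cobounded]
  have hnorm : Tendsto (‖·‖) (cobounded E) atTop := tendsto_norm_cobounded_atTop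
  refine tendsto_atTop_mono' _ ?_
    (hf.tendsto_cobounded.atTop_add ((tendsto_const_nhds (x := -f 0)).div_atTop hnorm))
  filter_upwards [hnorm.eventually_gt_atTop 0] with x hx
  have hsupport := hconv.add_inner_le_of_hasGradientAt (hf' x) 0
  rw [zero_sub, inner_neg_right] at hsupport
  have hcs := real_inner_le_norm (f' x) x
  rw [← add_div, div_le_iff₀ hx]
  linarith

end Coercive

theorem stmt3 {n : ℕ} (f : EuclideanSpace ℝ (Fin n) → ℝ)
    (f' : EuclideanSpace ℝ (Fin n) → EuclideanSpace ℝ (Fin n))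
    (hsc : StrictConvexOn ℝ Set.univ f) (hdiff : ∀ x, HasGradientAt f (f' x) x)
    (hcoer : Coercive1 f) :
    Continuous f' ∧ Function.Bijective f' ∧ Continuous (Function.invFun f') := by
  have hcont := hsc.convexOn.continuous_of_hasGradientAt hdiff
  have hbij : Function.Bijective f' :=
    ⟨hsc.injective_of_hasGradientAt hdiff, hcoer.surjective_of_hasGradientAt hdiff⟩
  have hproper : IsProperMap f' := isProperMap_iff_tendsto_cocompact.2
    ⟨hcont, Metric.cobounded_eq_cocompact (α := EuclideanSpace ℝ (Fin n)) ▸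
      hcoer.tendsto_cobounded_of_hasGradientAt hsc.convexOn hdiff⟩
  exact ⟨hcont, hbij, hbij.continuous_invFun_of_isClosedMap hproper.isClosedMap⟩
end

section
/- If f : ℝⁿ → ℝ is strictly convex, differentiable, and 1-coercive, then for every y ∈ ℝⁿ the Fenchel conjugate satisfies f*(y) = ⟨y, (∇f)⁻¹(y)⟩ − f((∇f)⁻¹(y)). -/
open Filter Set RealInnerProductSpace

/-!
Convexity makes every point with `∇f(x) = y` a maximiser of `x ↦ ⟪y, x⟫ - f x`, by the gradient
inequality. Such a point exists because, by 1-coercivity, `x ↦ f x - ⟪y, x⟫` tends to `+∞` at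
infinity, so it attains its minimum, where its gradient `∇f(x) - y` vanishes.
-/

section GradientInequality

variable {E : Type*} [NormedAddCommGroup E] [NormedSpace ℝ E]

theorem ConvexOn.add_le_of_hasFDerivAt {s : Set E} {f : E → ℝ} {f' : E →L[ℝ] ℝ} {x z : E}
    (hf : ConvexOn ℝ s f) (hx : x ∈ s) (hz : z ∈ s) (hf' : HasFDerivAt f f' x) :
    f x + f' (z - x) ≤ f z := by
  let φ : ℝ → ℝ := f ∘ AffineMap.lineMap x z
  have hφ : ConvexOn ℝ (AffineMap.lineMap x z ⁻¹' s) φ := hf.comp_affineMap _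
  have hφ' : HasDerivAt φ (f' (z - x)) 0 := by
    have hf'0 : HasFDerivAt f f' (AffineMap.lineMap x z (0 : ℝ)) := by simpa using hf'
    exact hf'0.comp_hasDerivAt 0 AffineMap.hasDerivAt_lineMap
  have hslope := hφ.le_slope_of_hasDerivAt (by simpa using hx) (by simpa using hz) one_pos hφ'
  simp only [slope_def_field, φ, Function.comp_apply, AffineMap.lineMap_apply_zero,
    AffineMap.lineMap_apply_one, sub_zero, div_one] at hslope
  linarith

end GradientInequality

section Coercive

open Bornology InnerProductSpace

variable {E : Type*} [NormedAddCommGroup E] [InnerProductSpace ℝ E]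

theorem tendsto_sub_inner_cobounded {f : E → ℝ}
    (hf : Tendsto (fun x => f x / ‖x‖) (cobounded E) atTop) (y : E) :
    Tendsto (fun x => f x - ⟪y, x⟫) (cobounded E) atTop := by
  refine tendsto_atTop_mono' _ ?_ tendsto_norm_cobounded_atTop
  filter_upwards [hf.eventually_ge_atTop (‖y‖ + 1),
    tendsto_norm_cobounded_atTop.eventually_gt_atTop 0] with x hfx hx
  have hfx' : (‖y‖ + 1) * ‖x‖ ≤ f x := (le_div_iff₀ hx).mp hfx
  nlinarith [real_inner_le_norm y x]

variable [CompleteSpace E]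

theorem ConvexOn.inner_sub_le_of_hasGradientAt {f : E → ℝ} {x y : E}
    (hf : ConvexOn ℝ univ f) (hy : HasGradientAt f y x) (z : E) :
    ⟪y, z⟫ - f z ≤ ⟪y, x⟫ - f x := by
  have h := hf.add_le_of_hasFDerivAt (mem_univ x) (mem_univ z) hy.hasFDerivAt
  rw [toDual_apply_apply, inner_sub_right] at h
  linarith

theorem exists_hasGradientAt_eq_of_tendsto_div_norm [ProperSpace E] {f : E → ℝ} {f' : E → E}
    (hf' : ∀ x, HasGradientAt f (f' x) x)
    (hf : Tendsto (fun x => f x / ‖x‖) (cobounded E) atTop) (y : E) :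
    ∃ x, f' x = y := by
  let g : E → ℝ := fun x => f x - ⟪y, x⟫
  have hg_cont : Continuous g :=
    (continuous_iff_continuousAt.mpr fun x => (hf' x).differentiableAt.continuousAt).sub
      (continuous_const.inner continuous_id)
  have hg_lim : Tendsto g (cocompact E) atTop := by
    rw [← Metric.cobounded_eq_cocompact]
    exact tendsto_sub_inner_cobounded hf y
  obtain ⟨x, hx⟩ := hg_cont.exists_forall_le hg_lim
  have hg' : HasFDerivAt g (toDual ℝ E (f' x) - toDual ℝ E y) x :=
    (hf' x).hasFDerivAt.sub (toDual ℝ E y).hasFDerivAt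
  have hzero := IsLocalMin.hasFDerivAt_eq_zero (Eventually.of_forall hx) hg'
  exact ⟨x, (toDual ℝ E).injective (sub_eq_zero.mp hzero)⟩

end Coercive

theorem fenchel_eq_of_hasGradientAt {n : ℕ} {f : EuclideanSpace ℝ (Fin n) → ℝ}
    {x y : EuclideanSpace ℝ (Fin n)} (hf : ConvexOn ℝ univ f) (hy : HasGradientAt f y x) :
    fenchel f y = ⟪y, x⟫ - f x :=
  IsGreatest.csSup_eq ⟨⟨x, rfl⟩, by
    rintro _ ⟨z, rfl⟩
    exact hf.inner_sub_le_of_hasGradientAt hy z⟩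

theorem stmt4 {n : ℕ} (f : EuclideanSpace ℝ (Fin n) → ℝ)
    (f' : EuclideanSpace ℝ (Fin n) → EuclideanSpace ℝ (Fin n))
    (hsc : StrictConvexOn ℝ Set.univ f) (hdiff : ∀ x, HasGradientAt f (f' x) x)
    (hcoer : Coercive1 f) :
    ∀ y, fenchel f y = ⟪y, Function.invFun f' y⟫ - f (Function.invFun f' y) := by
  intro y
  rw [Coercive1, comap_norm_atTop] at hcoer
  have hgrad := hdiff (Function.invFun f' y)
  rw [Function.invFun_eq (exists_hasGradientAt_eq_of_tendsto_div_norm hdiff hcoer y)] at hgrad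
  exact fenchel_eq_of_hasGradientAt hsc.convexOn hgrad
end

section
/- Let {W(ω) : ω ∈ Ω*} be a finite family of m×m doubly stochastic matrices such that the second smallest (by real part) eigenvalue of Σ_{ω∈Ω*}(I_m − W(ω)) has positive real part. Then the set of common fixed points {x ∈ ℝ^{mn} : (W(ω) ⊗ Iₙ)x = x for all ω ∈ Ω*} equals the consensus subspace C = {x : x₁ = ⋯ = x_m}. -/
open Filter Set RealInnerProductSpace

def DoublyStochastic {m : ℕ} (W : Matrix (Fin m) (Fin m) ℝ) : Prop :=
  (∀ i j, 0 ≤ W i j) ∧ (∀ i, ∑ j, W i j = 1) ∧ (∀ j, ∑ i, W i j = 1)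

/-!
A common fixed point `x` of the `W ω ⊗ Iₙ` has, in each coordinate `k`, a real vector
`j ↦ x j k` fixed by every `W ω`, hence in the kernel of `L = ∑ ω (I - W ω)`. Its
complexification is then an eigenvector of `L` for the eigenvalue `0`, which the spectral
hypothesis forces to be constant. Conversely, constant vectors are fixed because the
rows of each `W ω` sum to `1`.
-/

open Matrix

section

variable {ι : Type*} [Fintype ι]

theorem Matrix.sum_one_sub_mulVec_eq_zero {R Ω : Type*} [Ring R] [DecidableEq ι] [Fintype Ω]
    (W : Ω → Matrix ι ι R) {v : ι → R} (hv : ∀ ω, W ω *ᵥ v = v) :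
    (∑ ω, (1 - W ω)) *ᵥ v = 0 := by
  simp only [sum_mulVec, sub_mulVec, one_mulVec, hv, sub_self, Finset.sum_const_zero]

theorem Matrix.map_ofReal_mulVec_ofReal {ι' : Type*} (A : Matrix ι' ι ℝ) (v : ι → ℝ) :
    A.map (fun a => (a : ℂ)) *ᵥ (fun i => (v i : ℂ)) = fun i => ((A *ᵥ v) i : ℂ) :=
  funext fun i => (RingHom.map_mulVec Complex.ofRealHom A v i).symm

theorem Matrix.ofReal_eq_const_of_mulVec_eq_zero {A : Matrix ι ι ℝ}
    (hker : ∀ v : ι → ℂ, v ≠ 0 → A.map (fun a => (a : ℂ)) *ᵥ v = 0 → ∃ c : ℂ, v = fun _ => c)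
    {v : ι → ℝ} (hv : A *ᵥ v = 0) (i j : ι) : v i = v j := by
  by_cases hv0 : (fun i => (v i : ℂ)) = 0
  · exact Complex.ofReal_injective ((congrFun hv0 i).trans (congrFun hv0 j).symm)
  · obtain ⟨c, hc⟩ := hker _ hv0 (by rw [map_ofReal_mulVec_ofReal, hv]; rfl)
    exact Complex.ofReal_injective ((congrFun hc i).trans (congrFun hc j).symm)

theorem sum_smul_apply_eq_mulVec {n : ℕ} (A : Matrix ι ι ℝ) (x : ι → EuclideanSpace ℝ (Fin n))
    (i : ι) (k : Fin n) : (∑ j, A i j • x j) k = (A *ᵥ fun j => x j k) i := by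
  simp [mulVec, dotProduct, WithLp.ofLp_sum]

theorem sum_smul_const_of_sum_eq_one {E : Type*} [AddCommMonoid E] [Module ℝ E] {a : ι → ℝ}
    (ha : ∑ j, a j = 1) (y : E) : ∑ j, a j • y = y := by
  rw [← Finset.sum_smul, ha, one_smul]

end

theorem stmt13 {n m : ℕ} {Ω : Type*} [Fintype Ω]
    (W : Ω → Matrix (Fin m) (Fin m) ℝ) (hW : ∀ ω, DoublyStochastic (W ω))
    (hlam2 : ∀ (μ : ℂ) (v : Fin m → ℂ), v ≠ 0 →
      ((∑ ω, ((1 : Matrix (Fin m) (Fin m) ℝ) - W ω)).map (fun a => (a : ℂ))).mulVec v = μ • v →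
      μ.re ≤ 0 → ∃ c : ℂ, v = fun _ => c) :
    {x : Fin m → EuclideanSpace ℝ (Fin n) | ∀ ω i, ∑ j, W ω i j • x j = x i}
      = {x : Fin m → EuclideanSpace ℝ (Fin n) | ∀ i j, x i = x j} := by
  ext x
  refine ⟨fun hx i j => ?_, fun hx ω i => ?_⟩
  · ext k
    have hker : ∀ v : Fin m → ℂ, v ≠ 0 →
        (∑ ω, (1 - W ω)).map (fun a => (a : ℂ)) *ᵥ v = 0 → ∃ c : ℂ, v = fun _ => c :=
      fun v hv h => hlam2 0 v hv (by rw [h, zero_smul]) le_rfl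
    have hfix : ∀ ω, W ω *ᵥ (fun j => x j k) = fun j => x j k := fun ω =>
      funext fun i' => by rw [← sum_smul_apply_eq_mulVec, hx ω i']
    exact ofReal_eq_const_of_mulVec_eq_zero hker (sum_one_sub_mulVec_eq_zero W hfix) i j
  · calc ∑ j, W ω i j • x j = ∑ j, W ω i j • x i := by simp only [hx _ i]
      _ = x i := sum_smul_const_of_sum_eq_one ((hW ω).2.1 i) (x i)
end
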